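/- Let H = J₁ᵀ V⁻¹ J₁ where V is symmetric positive definite and J₁ has full column rank. Then H is symmetric positive definite, and for X = H⁻¹ - H⁻¹J₂ᵀ(J₂H⁻¹J₂ᵀ)⁻¹J₂H⁻¹ (with J₂ full row rank), the matrix V - J₁ X J₁ᵀ is positive semidefinite. -/

import Mathlib

/-!
The block matrix `[[V, J₁], [J₁ᴴ, H]]` has Schur complement `H - J₁ᴴ V⁻¹ J₁ = 0` with respect to
`V`, so it is positive semidefinite, and its Schur complement with respect to `H` gives
`J₁ H⁻¹ J₁ᴴ ≤ V`. Expanding `X` writes `V - J₁ X J₁ᴴ` as `(V - J₁ H⁻¹ J₁ᴴ) + B K⁻¹ Bᴴ` with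
`B = J₁ H⁻¹ J₂ᴴ` and `K = J₂ H⁻¹ J₂ᴴ ≥ 0`, a sum of two positive semidefinite matrices.
-/

open Matrix

namespace Matrix

lemma mulVec_injective_of_rank_eq_card {m n K : Type*} [Field K] [Fintype n] {A : Matrix m n K}
    (h : A.rank = Fintype.card n) : Function.Injective A.mulVec := by
  rw [mulVec_injective_iff, linearIndependent_iff_card_eq_finrank_span, Set.finrank,
    ← rank_eq_finrank_span_cols, h]

lemma mul_sub_inv_mul_mul_conjTranspose_eq {ι κ μ R : Type*} [Fintype κ] [DecidableEq κ]
    [Fintype μ] [CommRing R] [StarRing R] {H : Matrix κ κ R} (hH : H.IsHermitian)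
    (J : Matrix ι κ R) (K : Matrix μ κ R) (M : Matrix μ μ R) :
    J * (H⁻¹ - H⁻¹ * Kᴴ * M * K * H⁻¹) * Jᴴ =
      J * H⁻¹ * Jᴴ - (J * H⁻¹ * Kᴴ) * M * (J * H⁻¹ * Kᴴ)ᴴ := by
  simp only [conjTranspose_mul, conjTranspose_conjTranspose, conjTranspose_nonsing_inv, hH.eq,
    Matrix.mul_sub, Matrix.sub_mul, Matrix.mul_assoc]

variable {ι κ K : Type*} [Fintype ι] [DecidableEq ι] [Fintype κ] [DecidableEq κ]
  [Field K] [PartialOrder K] [StarRing K] [StarOrderedRing K]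

lemma PosDef.posSemidef_sub_mul_inv_mul_conjTranspose {V : Matrix ι ι K} {J : Matrix ι κ K}
    (hV : V.PosDef) (hH : (Jᴴ * V⁻¹ * J).PosDef) :
    (V - J * (Jᴴ * V⁻¹ * J)⁻¹ * Jᴴ).PosSemidef := by
  have := hV.isUnit.invertible
  have := hH.isUnit.invertible
  have hblock : (fromBlocks V J Jᴴ (Jᴴ * V⁻¹ * J)).PosSemidef := by
    rw [hV.fromBlocks₁₁, sub_self]
    exact .zero
  exact (hH.fromBlocks₂₂ V J).mp hblock

end Matrix

theorem stmt14_general {p n m : ℕ}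
    (V : Matrix (Fin p) (Fin p) ℝ) (J₁ : Matrix (Fin p) (Fin n) ℝ)
    (J₂ : Matrix (Fin m) (Fin n) ℝ)
    (hV : V.PosDef) (hJ₁ : J₁.rank = n) :
    (J₁ᵀ * V⁻¹ * J₁).PosDef ∧
    (V - J₁ *
        ((J₁ᵀ * V⁻¹ * J₁)⁻¹ -
          (J₁ᵀ * V⁻¹ * J₁)⁻¹ * J₂ᵀ *
            (J₂ * (J₁ᵀ * V⁻¹ * J₁)⁻¹ * J₂ᵀ)⁻¹ * J₂ * (J₁ᵀ * V⁻¹ * J₁)⁻¹) *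
        J₁ᵀ).PosSemidef := by
  simp only [← conjTranspose_eq_transpose_of_trivial]
  have hH : (J₁ᴴ * V⁻¹ * J₁).PosDef :=
    hV.inv.conjTranspose_mul_mul_same (mulVec_injective_of_rank_eq_card (by rwa [Fintype.card_fin]))
  refine ⟨hH, ?_⟩
  rw [mul_sub_inv_mul_mul_conjTranspose_eq hH.isHermitian, ← sub_add]
  exact (hV.posSemidef_sub_mul_inv_mul_conjTranspose hH).add
    ((hH.inv.posSemidef.mul_mul_conjTranspose_same J₂).inv.mul_mul_conjTranspose_same _)

theorem stmt14 {p n m : ℕ}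
    (V : Matrix (Fin p) (Fin p) ℝ) (J₁ : Matrix (Fin p) (Fin n) ℝ)
    (J₂ : Matrix (Fin m) (Fin n) ℝ)
    (hV : V.PosDef) (hJ₁ : J₁.rank = n) (hJ₂ : J₂.rank = m) :
    (J₁ᵀ * V⁻¹ * J₁).PosDef ∧
    (V - J₁ *
        ((J₁ᵀ * V⁻¹ * J₁)⁻¹ -
          (J₁ᵀ * V⁻¹ * J₁)⁻¹ * J₂ᵀ *
            (J₂ * (J₁ᵀ * V⁻¹ * J₁)⁻¹ * J₂ᵀ)⁻¹ * J₂ * (J₁ᵀ * V⁻¹ * J₁)⁻¹) *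
        J₁ᵀ).PosSemidef :=
  stmt14_general V J₁ J₂ hV hJ₁
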